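/- For every real number R > 0, ∫_0^{π/2} (2R/√π)·cos²(φ)·e^{−R² sin²(φ)} dφ ≥ erf(πR/2) − 1/(2R²). -/

import Mathlib

set_option maxHeartbeats 1000000


open Real MeasureTheory intervalIntegral

/-- The error function `erf z = (2/√π) ∫_0^z e^{-t²} dt`. -/
noncomputable def erf (z : ℝ) : ℝ := (2 / Real.sqrt π) * ∫ t in (0:ℝ)..z, Real.exp (-t ^ 2)

/-- Intermediate bound in the proof of Lemma 1 of the paper:
`∫_0^{π/2} (2R/√π) cos²φ e^{−R² sin²φ} dφ ≥ erf(πR/2) − 1/(2R²)`. -/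
theorem gaussian_cos_integral_lower_bound (R : ℝ) (hR : 0 < R) :
    (∫ φ in (0:ℝ)..(π / 2),
      (2 * R / Real.sqrt π) * Real.cos φ ^ 2 * Real.exp (-R ^ 2 * Real.sin φ ^ 2)) ≥
    erf (π * R / 2) - 1 / (2 * R ^ 2) := by
  have hπ : (0:ℝ) < π := Real.pi_pos
  have hsπ : (0:ℝ) < Real.sqrt π := Real.sqrt_pos.mpr hπ
  have ha0 : (0:ℝ) ≤ π / 2 := by linarith
  have hb : (0:ℝ) < R ^ 2 := by positivity
  set c : ℝ := 2 * R / Real.sqrt π with hc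
  have hc0 : 0 ≤ c := by positivity
  -- integrability of everything in sight
  have hcont1 : Continuous fun φ : ℝ => c * Real.cos φ ^ 2 * Real.exp (-R ^ 2 * Real.sin φ ^ 2) :=
    by continuity
  have hcont2 : Continuous fun φ : ℝ => c * (1 - φ ^ 2) * Real.exp (-R ^ 2 * φ ^ 2) :=
    by continuity
  have hcontE : Continuous fun φ : ℝ => Real.exp (-R ^ 2 * φ ^ 2) := by continuity
  have hcontM : Continuous fun φ : ℝ => φ ^ 2 * Real.exp (-R ^ 2 * φ ^ 2) := by continuity
  -- Step 1: pointwise comparison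
  have step1 : (∫ φ in (0:ℝ)..(π / 2), c * (1 - φ ^ 2) * Real.exp (-R ^ 2 * φ ^ 2)) ≤
      ∫ φ in (0:ℝ)..(π / 2), c * Real.cos φ ^ 2 * Real.exp (-R ^ 2 * Real.sin φ ^ 2) := by
    apply intervalIntegral.integral_mono_on ha0
      (hcont2.intervalIntegrable _ _) (hcont1.intervalIntegrable _ _)
    intro x hx
    obtain ⟨hx0, hx2⟩ := hx
    have hsin : Real.sin x ≤ x := Real.sin_le hx0
    have hsin0 : 0 ≤ Real.sin x :=
      Real.sin_nonneg_of_nonneg_of_le_pi hx0 (by linarith)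
    have hexp : Real.exp (-R ^ 2 * x ^ 2) ≤ Real.exp (-R ^ 2 * Real.sin x ^ 2) := by
      apply Real.exp_le_exp.mpr
      have hs2 : Real.sin x ^ 2 ≤ x ^ 2 := by nlinarith
      nlinarith [mul_le_mul_of_nonneg_left hs2 hb.le]
    have hcos0 : 0 ≤ Real.cos x := Real.cos_nonneg_of_mem_Icc ⟨by linarith, hx2⟩
    rcases le_or_gt (1 - x ^ 2) 0 with h1 | h1
    · have hL : c * (1 - x ^ 2) * Real.exp (-R ^ 2 * x ^ 2) ≤ 0 := by
        apply mul_nonpos_of_nonpos_of_nonneg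
        · exact mul_nonpos_of_nonneg_of_nonpos hc0 h1
        · positivity
      have hRp : 0 ≤ c * Real.cos x ^ 2 * Real.exp (-R ^ 2 * Real.sin x ^ 2) := by positivity
      linarith
    · have hcosq : 1 - x ^ 2 ≤ Real.cos x ^ 2 := by
        have h2 : 1 - x ^ 2 / 2 ≤ Real.cos x := Real.one_sub_sq_div_two_le_cos
        nlinarith
      have : (1 - x ^ 2) * Real.exp (-R ^ 2 * x ^ 2) ≤
          Real.cos x ^ 2 * Real.exp (-R ^ 2 * Real.sin x ^ 2) := by
        have e2 : (0:ℝ) ≤ Real.exp (-R ^ 2 * Real.sin x ^ 2) := (Real.exp_pos _).le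
        nlinarith [Real.exp_pos (-R ^ 2 * x ^ 2)]
      calc c * (1 - x ^ 2) * Real.exp (-R ^ 2 * x ^ 2)
          = c * ((1 - x ^ 2) * Real.exp (-R ^ 2 * x ^ 2)) := by ring
        _ ≤ c * (Real.cos x ^ 2 * Real.exp (-R ^ 2 * Real.sin x ^ 2)) :=
            mul_le_mul_of_nonneg_left this hc0
        _ = c * Real.cos x ^ 2 * Real.exp (-R ^ 2 * Real.sin x ^ 2) := by ring
  -- notation for the two basic integrals
  set I1 : ℝ := ∫ φ in (0:ℝ)..(π / 2), Real.exp (-R ^ 2 * φ ^ 2) with hI1def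
  set I2 : ℝ := ∫ φ in (0:ℝ)..(π / 2), φ ^ 2 * Real.exp (-R ^ 2 * φ ^ 2) with hI2def
  -- Step 2: FTC identity for the second moment
  have key : I2 = 1 / (2 * R ^ 2) * I1
      - π / 2 / (2 * R ^ 2) * Real.exp (-R ^ 2 * (π / 2) ^ 2) := by
    have hderiv : ∀ x ∈ Set.uIcc (0:ℝ) (π / 2),
        HasDerivAt (fun φ : ℝ => -(φ / (2 * R ^ 2)) * Real.exp (-R ^ 2 * φ ^ 2))
          (x ^ 2 * Real.exp (-R ^ 2 * x ^ 2)
            - 1 / (2 * R ^ 2) * Real.exp (-R ^ 2 * x ^ 2)) x := by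
      intro x _
      have h1 : HasDerivAt (fun φ : ℝ => -(φ / (2 * R ^ 2))) (-(1 / (2 * R ^ 2))) x := by
        have := ((hasDerivAt_id x).div_const (2 * R ^ 2)).neg
        simpa only [one_div, Pi.neg_def, id] using this
      have hinner : HasDerivAt (fun φ : ℝ => -R ^ 2 * φ ^ 2) (-R ^ 2 * (2 * x)) x := by
        simpa using ((hasDerivAt_pow 2 x).const_mul (-R ^ 2))
      have h2 := hinner.exp
      have := h1.mul h2
      refine this.congr_deriv ?_
      have hI : R ^ 2 * (R ^ 2)⁻¹ = 1 := mul_inv_cancel₀ hb.ne'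
      linear_combination (x ^ 2 * Real.exp (-R ^ 2 * x ^ 2)) * hI
    have hint : IntervalIntegrable
        (fun x : ℝ => x ^ 2 * Real.exp (-R ^ 2 * x ^ 2)
          - 1 / (2 * R ^ 2) * Real.exp (-R ^ 2 * x ^ 2)) volume 0 (π / 2) :=
      ((hcontM.sub (continuous_const.mul hcontE)).intervalIntegrable _ _)
    have heq := intervalIntegral.integral_eq_sub_of_hasDerivAt hderiv hint
    have hsplit : (∫ x in (0:ℝ)..(π / 2),
        (x ^ 2 * Real.exp (-R ^ 2 * x ^ 2) - 1 / (2 * R ^ 2) * Real.exp (-R ^ 2 * x ^ 2)))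
        = I2 - 1 / (2 * R ^ 2) * I1 := by
      rw [intervalIntegral.integral_sub (hcontM.intervalIntegrable _ _)
        ((show Continuous fun x : ℝ => 1 / (2 * R ^ 2) * Real.exp (-R ^ 2 * x ^ 2) from continuous_const.mul hcontE).intervalIntegrable _ _),
        intervalIntegral.integral_const_mul]
    rw [hsplit] at heq
    simp only [neg_mul, zero_div, neg_zero, zero_mul] at heq
    have : I2 - 1 / (2 * R ^ 2) * I1
        = -(π / 2 / (2 * R ^ 2) * Real.exp (-R ^ 2 * (π / 2) ^ 2)) := by
      rw [heq]; ring
    linarith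
  -- Step 3: the first integral is erf(πR/2)
  have herf : erf (π * R / 2) = c * I1 := by
    have hcomp : (∫ φ in (0:ℝ)..(π / 2), Real.exp (-R ^ 2 * φ ^ 2))
        = R⁻¹ • ∫ t in (R * 0)..(R * (π / 2)), Real.exp (-t ^ 2) := by
      rw [← intervalIntegral.integral_comp_mul_left (fun t => Real.exp (-t ^ 2)) hR.ne']
      apply intervalIntegral.integral_congr
      intro x _
      ring_nf
    have hI1' : I1 = R⁻¹ * ∫ t in (0:ℝ)..(π * R / 2), Real.exp (-t ^ 2) := by
      rw [hI1def, hcomp, show R * (π / 2) = π * R / 2 by ring, mul_zero, smul_eq_mul]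
    rw [erf, hI1', hc]
    field_simp
  -- Step 4: erf(πR/2) ≤ 1
  have herf_le : erf (π * R / 2) ≤ 1 := by
    rw [erf]
    have hz : (0:ℝ) ≤ π * R / 2 := by positivity
    have h1 : (∫ t in (0:ℝ)..(π * R / 2), Real.exp (-t ^ 2))
        = ∫ t in Set.Ioc (0:ℝ) (π * R / 2), Real.exp (-t ^ 2) :=
      intervalIntegral.integral_of_le hz
    have hfeq : (fun t : ℝ => Real.exp (-t ^ 2)) = fun t => Real.exp (-1 * t ^ 2) := by
      funext t; ring_nf
    have hint : IntegrableOn (fun t : ℝ => Real.exp (-t ^ 2)) (Set.Ioi 0) volume := by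
      rw [hfeq]
      exact (integrable_exp_neg_mul_sq one_pos).integrableOn
    have h2 : (∫ t in Set.Ioc (0:ℝ) (π * R / 2), Real.exp (-t ^ 2))
        ≤ ∫ t in Set.Ioi (0:ℝ), Real.exp (-t ^ 2) := by
      apply setIntegral_mono_set hint
      · exact Filter.Eventually.of_forall fun t => (Real.exp_pos _).le
      · exact (Set.Ioc_subset_Ioi_self).eventuallyLE
    have h3 : (∫ t in Set.Ioi (0:ℝ), Real.exp (-t ^ 2)) = Real.sqrt π / 2 := by
      rw [hfeq, integral_gaussian_Ioi, div_one]
    have : (∫ t in (0:ℝ)..(π * R / 2), Real.exp (-t ^ 2)) ≤ Real.sqrt π / 2 := by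
      rw [h1, ← h3]; exact h2
    calc 2 / Real.sqrt π * ∫ t in (0:ℝ)..(π * R / 2), Real.exp (-t ^ 2)
        ≤ 2 / Real.sqrt π * (Real.sqrt π / 2) := by
          apply mul_le_mul_of_nonneg_left this (by positivity)
      _ = 1 := by field_simp
  -- Step 5: put it together
  have hsplitg : (∫ φ in (0:ℝ)..(π / 2), c * (1 - φ ^ 2) * Real.exp (-R ^ 2 * φ ^ 2))
      = c * I1 - c * I2 := by
    have : ∀ φ : ℝ, c * (1 - φ ^ 2) * Real.exp (-R ^ 2 * φ ^ 2)
        = c * Real.exp (-R ^ 2 * φ ^ 2) - c * (φ ^ 2 * Real.exp (-R ^ 2 * φ ^ 2)) := by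
      intro φ; ring
    simp_rw [this]
    rw [intervalIntegral.integral_sub ((show Continuous fun φ : ℝ => c * Real.exp (-R ^ 2 * φ ^ 2) from continuous_const.mul hcontE).intervalIntegrable _ _)
      ((show Continuous fun φ : ℝ => c * (φ ^ 2 * Real.exp (-R ^ 2 * φ ^ 2)) from continuous_const.mul hcontM).intervalIntegrable _ _),
      intervalIntegral.integral_const_mul, intervalIntegral.integral_const_mul]
  rw [ge_iff_le]
  have hpos : 0 ≤ c * (π / 2 / (2 * R ^ 2) * Real.exp (-R ^ 2 * (π / 2) ^ 2)) := by positivity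
  have hE := herf
  have hcI2 : c * I2 = 1 / (2 * R ^ 2) * (c * I1)
      - c * (π / 2 / (2 * R ^ 2) * Real.exp (-R ^ 2 * (π / 2) ^ 2)) := by
    rw [key]; ring
  have hmul : 1 / (2 * R ^ 2) * erf (π * R / 2) ≤ 1 / (2 * R ^ 2) * 1 :=
    mul_le_mul_of_nonneg_left herf_le (by positivity)
  have hcI2' : c * I2 = 1 / (2 * R ^ 2) * erf (π * R / 2)
      - c * (π / 2 / (2 * R ^ 2) * Real.exp (-R ^ 2 * (π / 2) ^ 2)) := by
    rw [hE]; exact hcI2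
  linarith [step1, hsplitg, hcI2', hpos, hE, hmul]
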